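/- Let n ∈ ℕ, let c > 0 be a real number, let D ∈ ℝ^{n×n} be a symmetric matrix, let σ ∈ ℝⁿ be a fixed vector, and let V : ℝ → ℝ^{n×n} be a matrix-valued function that is differentiable at t₀ ∈ ℝ, such that V(t) is symmetric for every t and the matrix A(t) := I + V(t)·D is invertible for every t. Define λ(t) := A(t)⁻¹ · (c · V(t)·σ) and ν(t) := c·σ − D·λ(t). Then (i) λ(t) = V(t)·ν(t) and A(t)ᵀ·ν(t) = c·σ for every t, and (ii) the scalar function t ↦ σ · λ(t) is differentiable at t₀ with derivative equal to (1/c) · ν(t₀) · (V′(t₀) · ν(t₀)), where V′(t₀) denotes the derivative of V at t₀ and · between vectors denotes the Euclidean inner product. -/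

import Mathlib

/-!
Both parts of (i) are rearrangements of `(1 + V D) λ = c V σ`, using the symmetry of `V` and `D`.
For (ii), these identities give the exact secant formula
`c (σ ⬝ λ(t) - σ ⬝ λ(t₀)) = ν(t) ⬝ (V(t) - V(t₀)) ν(t₀)`,
so the derivative only needs `V` to be differentiable and `ν` to be continuous at `t₀`.
-/

open Matrix Filter Topology

namespace Matrix

variable {n R : Type*} [Fintype n] [CommRing R]

theorem IsSymm.dotProduct_mulVec {M : Matrix n n R} (hM : M.IsSymm) (x y : n → R) :
    x ⬝ᵥ (M *ᵥ y) = (M *ᵥ x) ⬝ᵥ y := by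
  rw [Matrix.dotProduct_mulVec, ← mulVec_transpose, hM.eq]

theorem dotProduct_sub_dotProduct_eq {V₀ V₁ D : Matrix n n R} (hV₁ : V₁.IsSymm) (hD : D.IsSymm)
    {b x₀ x₁ : n → R} (h₀ : x₀ = V₀ *ᵥ (b - D *ᵥ x₀)) (h₁ : x₁ = V₁ *ᵥ (b - D *ᵥ x₁)) :
    b ⬝ᵥ x₁ - b ⬝ᵥ x₀ = (b - D *ᵥ x₁) ⬝ᵥ ((V₁ - V₀) *ᵥ (b - D *ᵥ x₀)) := by
  rw [sub_mulVec, dotProduct_sub, ← h₀, hV₁.dotProduct_mulVec, ← h₁, dotProduct_sub,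
    sub_dotProduct, hD.dotProduct_mulVec, dotProduct_comm x₁ b]
  ring

variable [DecidableEq n] {V D : Matrix n n R}

theorem eq_mulVec_sub_of_one_add_mul_mulVec_eq {x y : n → R}
    (h : (1 + V * D) *ᵥ x = V *ᵥ y) : x = V *ᵥ (y - D *ᵥ x) := by
  rw [add_mulVec, one_mulVec, ← mulVec_mulVec] at h
  rw [mulVec_sub, ← h, add_sub_cancel_right]

theorem transpose_one_add_mul_mulVec (hV : V.IsSymm) (hD : D.IsSymm) (x : n → R) :
    (1 + V * D)ᵀ *ᵥ x = x + D *ᵥ (V *ᵥ x) := by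
  rw [transpose_add, transpose_one, transpose_mul, hV.eq, hD.eq, add_mulVec, one_mulVec,
    mulVec_mulVec]

end Matrix

section Calculus

variable {m n : Type*} {t : ℝ}

theorem continuousAt_of_hasDerivAt_apply {V : ℝ → Matrix m n ℝ} {V' : Matrix m n ℝ}
    (hV : ∀ i j, HasDerivAt (fun s => V s i j) (V' i j) t) : ContinuousAt V t :=
  continuousAt_pi.2 fun i => continuousAt_pi.2 fun j => (hV i j).continuousAt

variable [Fintype n]

theorem hasDerivAt_mulVec {V : ℝ → Matrix m n ℝ} {V' : Matrix m n ℝ}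
    (hV : ∀ i j, HasDerivAt (fun s => V s i j) (V' i j) t) (y : n → ℝ) :
    HasDerivAt (fun s => V s *ᵥ y) (V' *ᵥ y) t :=
  hasDerivAt_pi.2 fun i => HasDerivAt.fun_sum fun j _ => (hV i j).mul_const (y j)

theorem HasDerivAt.dotProduct_of_continuousAt_of_eq_zero {u w : ℝ → n → ℝ} {w' : n → ℝ}
    (hu : ContinuousAt u t) (hw : HasDerivAt w w' t) (hw₀ : w t = 0) :
    HasDerivAt (fun s => u s ⬝ᵥ w s) (u t ⬝ᵥ w') t := by
  rw [hasDerivAt_iff_tendsto_slope] at hw ⊢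
  have hslope : slope (fun s => u s ⬝ᵥ w s) t = fun s => u s ⬝ᵥ slope w t s := by
    ext s
    simp only [slope_def_module, hw₀, dotProduct_zero, sub_zero, dotProduct_smul]
  rw [hslope]
  exact ((Continuous.dotProduct continuous_fst continuous_snd).tendsto _).comp
    ((hu.tendsto.mono_left nhdsWithin_le_nhds).prodMk_nhds hw)

variable [DecidableEq n]

theorem continuousAt_inv_mulVec {A : ℝ → Matrix n n ℝ} {b : ℝ → n → ℝ} (hA : ContinuousAt A t)
    (hb : ContinuousAt b t) (hAt : IsUnit (A t)) : ContinuousAt (fun s => (A s)⁻¹ *ᵥ b s) t := by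
  have hinv : ContinuousAt (fun s => (A s)⁻¹) t := by
    refine (continuousAt_matrix_inv _ ?_).comp hA
    rw [Ring.inverse_eq_inv']
    exact continuousAt_inv₀ ((isUnit_iff_isUnit_det _).1 hAt).ne_zero
  fun_prop

end Calculus

/-- The finite-dimensional linear-algebraic core of the equivalence of the
energy-based and field-based definitions of the electrostatic forces: with
`A t = 1 + V t * D`, `λ t = (A t)⁻¹ (c • V t σ)` and `ν t = c • σ - D (λ t)`, one has
`λ t = V t ν t`, `(A t)ᵀ ν t = c • σ`, and the derivative of `t ↦ σ ⬝ᵥ λ t` at `t₀` equals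
`(1/c) * (ν t₀ ⬝ᵥ V' (ν t₀))`. -/
theorem stmt0
    (n : ℕ) (c : ℝ) (hc : 0 < c)
    (D : Matrix (Fin n) (Fin n) ℝ) (hD : D.IsSymm)
    (σ : Fin n → ℝ)
    (V : ℝ → Matrix (Fin n) (Fin n) ℝ) (V' : Matrix (Fin n) (Fin n) ℝ) (t₀ : ℝ)
    (hV : ∀ i j, HasDerivAt (fun t => V t i j) (V' i j) t₀)
    (hVsymm : ∀ t, (V t).IsSymm)
    (hA : ∀ t : ℝ, IsUnit (1 + V t * D))
    (lam ν : ℝ → Fin n → ℝ)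
    (hlam : ∀ t, lam t = (1 + V t * D)⁻¹ *ᵥ (c • (V t *ᵥ σ)))
    (hν : ∀ t, ν t = c • σ - D *ᵥ lam t) :
    (∀ t, lam t = V t *ᵥ ν t ∧ (1 + V t * D)ᵀ *ᵥ ν t = c • σ) ∧
      HasDerivAt (fun t => σ ⬝ᵥ lam t)
        ((1 / c) * (ν t₀ ⬝ᵥ (V' *ᵥ ν t₀))) t₀ := by
  have hsolve : ∀ t, lam t = V t *ᵥ (c • σ - D *ᵥ lam t) := fun t => by
    refine eq_mulVec_sub_of_one_add_mul_mulVec_eq ?_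
    rw [hlam t, mulVec_mulVec, mul_nonsing_inv _ ((isUnit_iff_isUnit_det _).1 (hA t)),
      one_mulVec, mulVec_smul]
  have hsecant : ∀ t, σ ⬝ᵥ lam t = σ ⬝ᵥ lam t₀ + 1 / c * (ν t ⬝ᵥ ((V t - V t₀) *ᵥ ν t₀)) :=
    fun t => by
      rw [hν, hν, ← dotProduct_sub_dotProduct_eq (hVsymm t) hD (hsolve t₀) (hsolve t),
        smul_dotProduct, smul_dotProduct, smul_eq_mul, smul_eq_mul]
      field_simp
      ring
  refine ⟨fun t => ⟨by rw [hν]; exact hsolve t, ?_⟩, ?_⟩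
  · rw [transpose_one_add_mul_mulVec (hVsymm t) hD, hν, ← hsolve, sub_add_cancel]
  have hVcont := continuousAt_of_hasDerivAt_apply hV
  have hlamcont : ContinuousAt lam t₀ := by
    rw [funext hlam]
    exact continuousAt_inv_mulVec (by fun_prop) (by fun_prop) (hA t₀)
  have hνcont : ContinuousAt ν t₀ := by
    rw [funext hν]
    fun_prop
  have hdiff : HasDerivAt (fun t => (V t - V t₀) *ᵥ ν t₀) (V' *ᵥ ν t₀) t₀ := by
    simpa only [sub_mulVec, sub_zero] using (hasDerivAt_mulVec hV (ν t₀)).sub_const (V t₀ *ᵥ ν t₀)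
  rw [funext hsecant]
  exact ((hdiff.dotProduct_of_continuousAt_of_eq_zero hνcont (by simp)).const_mul _).const_add _
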